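/- arXiv:2102.02809 — 3 statements merged into one kernel-verified Lean document; each statement's English description precedes it below -/
import Mathlib

section
/- Let X be an integer-valued random variable whose distribution is symmetric about 0 and such that m ↦ P(|X| = m) is non-increasing on the positive integers. Then for every positive integer γ, P(γ divides X | X ≠ 0) ≤ 1/γ. -/
/-!
Both sides are twice the corresponding sums over the positive integers, by symmetry. Cut the
positive integers into the blocks `{γk + 1, …, γk + γ}`: each block ends at the multiple
`γ(k + 1)`, which by monotonicity carries the least mass of its block, so `γ p(γ(k + 1))` is at
most the mass of the block.
-/

open Function

theorem HasSum.sum_fin_mul_add {α : Type*} [AddCommMonoid α] [TopologicalSpace α]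
    [ContinuousAdd α] [RegularSpace α] {f : ℕ → α} {a : α} (h : HasSum f a)
    (n : ℕ) [NeZero n] :
    HasSum (fun k => ∑ j : Fin n, f (k * n + j)) a :=
  ((Nat.divModEquiv n).symm.hasSum_iff.mpr h).prod_fiberwise fun _ => hasSum_fintype _

theorem AntitoneOn.mul_tsum_pnat_mul_le {f : ℕ → ℝ} (hf : AntitoneOn f (Set.Ici 1))
    (hs : Summable f) (γ : ℕ) [NeZero γ] :
    γ * ∑' k : ℕ+, f (γ * k) ≤ ∑' n : ℕ+, f n := by
  have hblocks : HasSum (fun k => ∑ j : Fin γ, f (k * γ + j + 1)) (∑' n, f (n + 1)) :=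
    (hs.comp_injective (add_left_injective 1)).hasSum.sum_fin_mul_add γ
  have hmul : Injective fun k : ℕ => γ * (k + 1) :=
    (mul_right_injective₀ (NeZero.ne γ)).comp (add_left_injective 1)
  rw [tsum_pnat_eq_tsum_succ (f := fun m => f (γ * m)), tsum_pnat_eq_tsum_succ,
    ← hblocks.tsum_eq, ← tsum_mul_left]
  refine Summable.tsum_le_tsum (fun k => ?_) ((hs.comp_injective hmul).mul_left (γ : ℝ))
    hblocks.summable
  calc (γ : ℝ) * f (γ * (k + 1))
    _ = ∑ _j : Fin γ, f (γ * (k + 1)) := by simp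
    _ ≤ ∑ j : Fin γ, f (k * γ + j + 1) := Finset.sum_le_sum fun j _ =>
      hf (Nat.le_add_left 1 _) (Nat.mul_pos (NeZero.pos γ) k.succ_pos)
        (by rw [Nat.mul_succ, mul_comm]; omega)

theorem Function.Even.tsum_ite_dvd_and_ne_zero {E : Type*} [AddCommGroup E] [UniformSpace E]
    [IsUniformAddGroup E] [CompleteSpace E] [T2Space E] {q : ℤ → E} (hq : q.Even)
    (hs : Summable q) (γ : ℕ) [NeZero γ] :
    ∑' x : ℤ, (if (γ : ℤ) ∣ x ∧ x ≠ 0 then q x else 0) = 2 • ∑' k : ℕ+, q (γ * k) := by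
  set F : ℤ → E := fun x => if (γ : ℤ) ∣ x ∧ x ≠ 0 then q x else 0
  have hmul : Injective ((γ : ℤ) * ·) :=
    mul_right_injective₀ (Int.natCast_ne_zero.mpr (NeZero.ne γ))
  have hF : ∀ k, F (γ * k) = 0 ∨ F (γ * k) = q (γ * k) := fun k => by
    by_cases hk : k = 0 <;> simp [F, hk, NeZero.ne γ]
  rw [← hmul.tsum_eq, tsum_int_eq_zero_add_two_mul_tsum_pnat]
  · simp [NeZero.ne γ]
  · intro k
    simp [mul_neg, hq (γ * k)]
  · exact (hs.comp_injective hmul).summable_of_eq_zero_or_self hF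
  · intro x hx
    obtain ⟨k, rfl⟩ : (γ : ℤ) ∣ x := by
      by_contra h
      exact hx (if_neg fun h' => h h'.1)
    exact ⟨k, rfl⟩

theorem symmetric_unimodal_dvd_bound_general
    (p : ℤ → ℝ) (hp1 : ∑' x, p x = 1)
    (hsymm : ∀ x : ℤ, p (-x) = p x)
    (hmono : ∀ m : ℤ, 1 ≤ m → p (m + 1) ≤ p m)
    (γ : ℕ) (hγ : 0 < γ) :
    (γ : ℝ) * ∑' x : ℤ, (if (γ : ℤ) ∣ x ∧ x ≠ 0 then p x else 0) ≤ 1 - p 0 := by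
  have : NeZero γ := ⟨hγ.ne'⟩
  have hs : Summable p := by
    by_contra h
    simp [tsum_eq_zero_of_not_summable h] at hp1
  have hanti : AntitoneOn (fun n : ℕ => p n) (Set.Ici 1) :=
    antitoneOn_nat_Ici_of_succ_le fun n hn => by exact_mod_cast hmono n (by exact_mod_cast hn)
  have hbound := hanti.mul_tsum_pnat_mul_le (hs.comp_injective Nat.cast_injective) γ
  push_cast at hbound
  rw [Function.Even.tsum_ite_dvd_and_ne_zero hsymm hs, ← hp1,
    tsum_int_eq_zero_add_two_mul_tsum_pnat hsymm hs, two_nsmul, two_nsmul]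
  linarith

/-- Let `X` be an integer-valued random variable (with pmf `p`) whose distribution is
symmetric about `0` and with `m ↦ P(|X| = m)` non-increasing on positive integers,
and `P(X ≠ 0) > 0`. Then for every `γ ≥ 1`,
`P(γ ∣ X | X ≠ 0) ≤ 1/γ`, i.e. `γ · P(γ ∣ X and X ≠ 0) ≤ P(X ≠ 0)`. -/
theorem symmetric_unimodal_dvd_bound
    (p : ℤ → ℝ) (hp0 : ∀ x, 0 ≤ p x) (hp1 : ∑' x, p x = 1)
    (hsymm : ∀ x : ℤ, p (-x) = p x)
    (hmono : ∀ m : ℤ, 1 ≤ m → p (m + 1) ≤ p m)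
    (hne : 0 < 1 - p 0)
    (γ : ℕ) (hγ : 0 < γ) :
    (γ : ℝ) * ∑' x : ℤ, (if (γ : ℤ) ∣ x ∧ x ≠ 0 then p x else 0) ≤ 1 - p 0 :=
  symmetric_unimodal_dvd_bound_general p hp1 hsymm hmono γ hγ
end

section
/- Let S be a random variable on a finite group G constructed as S = W·Z where W is a random variable on ℤ^k and Z is independent of W, and let S' = W'·Z with W' an independent copy of W (same Z). Then for any subset 𝒲 ⊆ ℤ^k with P(W ∈ 𝒲) > 0: 4 · E_Z[ ‖P(S ∈ · | W ∈ 𝒲, Z) − π_G‖_TV^2 ] ≤ |G| · P(S = S' | W ∈ 𝒲, W' ∈ 𝒲) − 1, where π_G is the uniform distribution on G and the outer expectation is over Z. -/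
/-!
For fixed `z`, let `q` be the pushforward of the normalised weights `𝟙_𝒲 p / P(W ∈ 𝒲)` under
`w ↦ f w z`. By Cauchy–Schwarz, `(∑ |q g - 1/|G||)² ≤ |G| ∑ (q g - 1/|G|)² = |G| ∑ q g² - 1`, and
`∑ q g²` is the collision probability `P(f W z = f W' z)` for independent `W, W'` with these weights.
Averaging over `z` gives the bound.
-/

open Finset

section FibreMass

variable {α β : Type*} [DecidableEq β] {m : α → ℝ}

lemma summable_mul_ite_eq (hm : Summable m) (f : α → β) (b : β) :
    Summable fun a => m a * if f a = b then 1 else 0 :=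
  (hm.indicator (f ⁻¹' {b})).congr fun a => by by_cases h : f a = b <;> simp [h]

variable [Fintype β]

lemma sum_tsum_mul_ite_eq (hm : Summable m) (f : α → β) :
    ∑ b, ∑' a, m a * (if f a = b then 1 else 0) = ∑' a, m a := by
  rw [← Summable.tsum_finsetSum fun b _ => summable_mul_ite_eq hm f b]
  simp

lemma tsum_tsum_mul_ite_eq_eq_sum_sq (hm : Summable m) (f : α → β) :
    ∑' a, ∑' a', m a * m a' * (if f a = f a' then 1 else 0)
      = ∑ b, (∑' a, m a * if f a = b then 1 else 0) ^ 2 := by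
  set Q : β → ℝ := fun b => ∑' a, m a * if f a = b then 1 else 0
  have hinner (a : α) : ∑' a', m a * m a' * (if f a = f a' then 1 else 0)
      = ∑ b, (m a * if f a = b then 1 else 0) * Q b := by
    calc ∑' a', m a * m a' * (if f a = f a' then 1 else 0) = m a * Q (f a) := by
          rw [← tsum_mul_left]
          simp [eq_comm]
      _ = ∑ b, (m a * if f a = b then 1 else 0) * Q b := by simp
  simp_rw [hinner]
  rw [Summable.tsum_finsetSum fun b _ => (summable_mul_ite_eq hm f b).mul_right _]
  simp_rw [tsum_mul_right, sq]
  rfl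

end FibreMass

lemma sq_sum_abs_sub_inv_card_le {ι : Type*} [Fintype ι] (q : ι → ℝ) (hq : ∑ i, q i = 1) :
    (∑ i, |q i - 1 / (Fintype.card ι : ℝ)|) ^ 2 ≤ Fintype.card ι * ∑ i, q i ^ 2 - 1 := by
  set n : ℝ := (Fintype.card ι : ℝ)
  have hn : n ≠ 0 := by
    rintro hn
    simp [n, Fintype.card_eq_zero_iff] at hn
    simp at hq
  have hvar : ∑ i, (q i - 1 / n) ^ 2 = ∑ i, q i ^ 2 - 1 / n := by
    simp only [sub_sq, sum_add_distrib, sum_sub_distrib, ← sum_mul, ← mul_sum, hq, sum_const,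
      card_univ, nsmul_eq_mul]
    field_simp
    ring
  calc (∑ i, |q i - 1 / n|) ^ 2 ≤ n * ∑ i, |q i - 1 / n| ^ 2 := sq_sum_le_card_mul_sum_sq
    _ = n * ∑ i, q i ^ 2 - 1 := by simp_rw [sq_abs, hvar]; field_simp

lemma four_mul_sq_tvDist_uniform_le {α β : Type*} [Fintype β] [DecidableEq β] {m : α → ℝ}
    (hm : Summable m) (hm0 : ∑' a, m a ≠ 0) (f : α → β) :
    4 * ((∑ b, |(∑' a, m a * (if f a = b then 1 else 0)) / ∑' a, m a
        - 1 / (Fintype.card β : ℝ)|) / 2) ^ 2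
      ≤ Fintype.card β * ((∑' a, ∑' a', m a * m a' * (if f a = f a' then 1 else 0))
        / (∑' a, m a) ^ 2) - 1 := by
  have hq : ∑ b, (∑' a, m a * (if f a = b then 1 else 0)) / ∑' a, m a = 1 := by
    rw [← sum_div, sum_tsum_mul_ite_eq hm f, div_self hm0]
  calc _ = _ := by ring
    _ ≤ _ := sq_sum_abs_sub_inv_card_le _ hq
    _ = _ := by rw [tsum_tsum_mul_ite_eq_eq_sum_sq hm f, sum_div]; simp_rw [div_pow]

theorem modified_l2_bound_general
    (G : Type*) [Fintype G] [DecidableEq G] (k : ℕ)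
    (f : (Fin k → ℤ) → (Fin k → G) → G)
    (p : (Fin k → ℤ) → ℝ)
    (ζ : (Fin k → G) → ℝ) (hζ0 : ∀ z, 0 ≤ ζ z) (hζ1 : ∑ z, ζ z = 1)
    (𝒲 : Set (Fin k → ℤ))
    (PW : ℝ) (hPW : PW = ∑' w, 𝒲.indicator p w) (hpos : 0 < PW) :
    4 * ∑ z : Fin k → G, ζ z *
        ((∑ g : G, |(∑' w : Fin k → ℤ,
            𝒲.indicator p w * (if f w z = g then 1 else 0)) / PW
          - 1 / (Fintype.card G : ℝ)|) / 2) ^ 2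
      ≤ (Fintype.card G : ℝ) *
          ((∑ z : Fin k → G, ζ z * ∑' w : Fin k → ℤ, ∑' w' : Fin k → ℤ,
              𝒲.indicator p w * 𝒲.indicator p w'
                * (if f w z = f w' z then 1 else 0)) / PW ^ 2)
        - 1 := by
  subst hPW
  -- a non-summable family has `tsum` equal to `0`
  have hm : Summable (𝒲.indicator p) := by
    by_contra h
    rw [tsum_eq_zero_of_not_summable h] at hpos
    exact hpos.false
  have hz (z : Fin k → G) := mul_le_mul_of_nonneg_left
    (four_mul_sq_tvDist_uniform_le hm hpos.ne' (f · z)) (hζ0 z)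
  refine (Eq.trans_le ?_ (sum_le_sum fun z (_ : z ∈ univ) => hz z)).trans_eq ?_
  · rw [mul_sum]
    exact sum_congr rfl fun z _ => by ring
  · simp only [mul_sub, mul_one, sum_sub_distrib, hζ1, sum_div, mul_sum]
    exact congrArg (· - 1) (sum_congr rfl fun z _ => by ring)

/-- Modified `L²` calculation. `S = W · Z` where `W` (pmf `p` on `ℤ^k`) is independent
of `Z` (pmf `ζ` on `G^k`), `W'` an independent copy of `W`, `S' = W' · Z`, and the word
map is `f`. For any `𝒲 ⊆ ℤ^k` with `P(W ∈ 𝒲) > 0`: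
`4 E_Z[‖P(S ∈ · | W ∈ 𝒲, Z) − π_G‖_TV²] ≤ |G| · P(S = S' | W, W' ∈ 𝒲) − 1`. -/
theorem modified_l2_bound
    (G : Type*) [Group G] [Fintype G] [DecidableEq G] (k : ℕ)
    (f : (Fin k → ℤ) → (Fin k → G) → G)
    (p : (Fin k → ℤ) → ℝ) (hp0 : ∀ w, 0 ≤ p w) (hp1 : ∑' w, p w = 1)
    (ζ : (Fin k → G) → ℝ) (hζ0 : ∀ z, 0 ≤ ζ z) (hζ1 : ∑ z, ζ z = 1)
    (𝒲 : Set (Fin k → ℤ))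
    (PW : ℝ) (hPW : PW = ∑' w, 𝒲.indicator p w) (hpos : 0 < PW) :
    4 * ∑ z : Fin k → G, ζ z *
        ((∑ g : G, |(∑' w : Fin k → ℤ,
            𝒲.indicator p w * (if f w z = g then 1 else 0)) / PW
          - 1 / (Fintype.card G : ℝ)|) / 2) ^ 2
      ≤ (Fintype.card G : ℝ) *
          ((∑ z : Fin k → G, ζ z * ∑' w : Fin k → ℤ, ∑' w' : Fin k → ℤ,
              𝒲.indicator p w * 𝒲.indicator p w'
                * (if f w z = f w' z then 1 else 0)) / PW ^ 2)
        - 1 :=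
  modified_l2_bound_general G k f p ζ hζ0 hζ1 𝒲 PW hPW hpos
end

section
/- Let G be a finite abelian group with |G| = n, let Z = (Z_1,...,Z_k) be elements of G, and let V be a ℤ^k-valued random variable independent of any randomness in Z, with g := gcd(V_1,...,V_k,n). If Z_1,...,Z_k are i.i.d. uniform on G, then n · P(V·Z = 0 and V ≠ 0) ≤ E[ g^{d(G)} · 1{V ≠ 0} ], where the probability and expectation are over both V and Z, and d(G) is the minimal size of a generating set of G. -/
lemma bezout_finset {k : ℕ} (v : Fin k → ℤ) (s : Finset (Fin k)) :
    ∃ c : Fin k → ℤ, ((s.gcd fun i => (v i).natAbs : ℕ) : ℤ) = ∑ i ∈ s, c i * v i := by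
  classical
  induction s using Finset.induction_on with
  | empty => exact ⟨0, by simp⟩
  | @insert a s ha ih =>
    obtain ⟨c, hc⟩ := ih
    obtain ⟨d, hd⟩ : ∃ d : ℤ, ((v a).natAbs : ℤ) = d * v a := by
      rcases Int.natAbs_eq (v a) with h | h
      · exact ⟨1, by rw [one_mul, ← h]⟩
      · exact ⟨-1, by rw [neg_one_mul, ← neg_eq_iff_eq_neg.mpr h]⟩
    set x : ℤ := (((v a).natAbs : ℕ) : ℤ) with hx
    set y : ℤ := ((s.gcd fun i => (v i).natAbs : ℕ) : ℤ) with hy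
    refine ⟨fun i => if i = a then d * x.gcdA y else x.gcdB y * c i, ?_⟩
    have h1 : (((insert a s).gcd fun i => (v i).natAbs : ℕ) : ℤ)
        = x * x.gcdA y + y * x.gcdB y := by
      rw [Finset.gcd_insert, gcd_eq_nat_gcd, ← Int.gcd_natCast_natCast,
        Int.gcd_eq_gcd_ab]
    have h2 : ∑ i ∈ s, (if i = a then d * x.gcdA y else x.gcdB y * c i) * v i
        = x.gcdB y * ∑ i ∈ s, c i * v i := by
      rw [Finset.mul_sum]
      refine Finset.sum_congr rfl fun i hi => ?_
      rw [if_neg (by rintro rfl; exact ha hi)]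
      ring
    have h3 : (fun i => if i = a then d * x.gcdA y else x.gcdB y * c i) a
        = d * x.gcdA y := by simp
    rw [Finset.sum_insert ha, h1, h2, ← hc, h3, hd]
    ring

lemma key_card (G : Type*) [AddCommGroup G] [Fintype G] [DecidableEq G] [AddGroup.FG G]
    {k : ℕ} (v : Fin k → ℤ) :
    Nat.card G * (Finset.univ.filter fun z : Fin k → G => ∑ i, v i • z i = 0).card
      ≤ (Nat.gcd (Finset.univ.gcd fun i => (v i).natAbs) (Nat.card G)) ^ AddGroup.rank G
        * (Fintype.card G) ^ k := by
  classical
  set g' : ℕ := Finset.univ.gcd fun i => (v i).natAbs with hg'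
  set n : ℕ := Nat.card G with hn
  set γ : ℕ := Nat.gcd g' n with hγ
  have hnpos : 0 < n := Nat.card_pos
  have hγpos : 0 < γ := Nat.gcd_pos_of_pos_right _ hnpos
  haveI : NeZero γ := ⟨hγpos.ne'⟩
  -- the homomorphisms
  set φ : (Fin k → G) →+ G := AddMonoidHom.mk' (fun z => ∑ i, v i • z i)
    (by intro a b; simp [smul_add, Finset.sum_add_distrib]) with hφ
  set mγ : G →+ G := AddMonoidHom.mk' (fun x => (γ : ℤ) • x)
    (by intro a b; simp [smul_add]) with hmγ
  -- Step A : mγ.range ≤ φ.range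
  have hA : mγ.range ≤ φ.range := by
    rintro _ ⟨x, rfl⟩
    obtain ⟨c, hc⟩ := bezout_finset v Finset.univ
    have hg'mem : (g' : ℤ) • x ∈ φ.range := by
      refine ⟨fun i => c i • x, ?_⟩
      show ∑ i, v i • (c i • x) = (g' : ℤ) • x
      rw [hc, Finset.sum_smul]
      exact Finset.sum_congr rfl fun i _ => by rw [smul_smul, mul_comm]
    have hbez : (γ : ℤ) = (g' : ℤ) * (g' : ℤ).gcdA (n : ℤ) + (n : ℤ) * (g' : ℤ).gcdB (n : ℤ) := by
      rw [hγ, ← Int.gcd_natCast_natCast, Int.gcd_eq_gcd_ab]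
    have hnx : (n : ℤ) • x = 0 := by
      rw [natCast_zsmul, hn]; exact card_nsmul_eq_zero'
    show (γ : ℤ) • x ∈ φ.range
    have h5 : (γ : ℤ) • x = ((g' : ℤ).gcdA (n : ℤ) * (g' : ℤ)) • x := by
      rw [hbez, add_smul, mul_comm (n : ℤ) ((g' : ℤ).gcdB (n : ℤ)),
        mul_smul ((g' : ℤ).gcdB (n : ℤ)) (n : ℤ), hnx, smul_zero, add_zero, mul_comm]
    rw [h5, mul_smul]
    exact AddSubgroup.zsmul_mem _ hg'mem _
  -- Step B : the quotient by mγ.range has card ≤ γ ^ rank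
  have hB : Nat.card (G ⧸ mγ.range) ≤ γ ^ AddGroup.rank G := by
    obtain ⟨S, hScard, hSgen⟩ := AddGroup.rank_spec G
    set π : G →+ G ⧸ mγ.range := QuotientAddGroup.mk' mγ.range with hπdef
    have hγkill : ∀ x : G, (γ : ℤ) • π x = 0 := by
      intro x
      rw [← map_zsmul]
      exact (QuotientAddGroup.eq_zero_iff _).mpr ⟨x, rfl⟩
    set e : Fin S.card → G := fun i => (S.equivFin.symm i : G) with he
    have hf : ∀ i : Fin S.card, (zmultiplesHom _ (π (e i))) ((γ : ℕ) : ℤ) = 0 := by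
      intro i
      simpa [zmultiplesHom_apply] using hγkill (e i)
    set L : Fin S.card → (ZMod γ →+ G ⧸ mγ.range) :=
      fun i => ZMod.lift γ ⟨zmultiplesHom _ (π (e i)), hf i⟩ with hL
    set ψ : (Fin S.card → ZMod γ) →+ G ⧸ mγ.range :=
      ∑ i, (L i).comp (Pi.evalAddMonoidHom (fun _ => ZMod γ) i) with hψdef
    have hψap : ∀ c, ψ c = ∑ i, L i (c i) := by
      intro c
      rw [hψdef, AddMonoidHom.finset_sum_apply]
      rfl
    have hhit : ∀ s0 ∈ S, π s0 ∈ ψ.range := by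
      intro s0 hs0
      refine ⟨Pi.single (S.equivFin ⟨s0, hs0⟩) 1, ?_⟩
      rw [hψap, Fintype.sum_eq_single (S.equivFin ⟨s0, hs0⟩)
        (fun i hij => by rw [Pi.single_eq_of_ne hij, map_zero])]
      rw [Pi.single_eq_same, ← Int.cast_one, hL, ZMod.lift_coe]
      show (1 : ℤ) • π (e (S.equivFin ⟨s0, hs0⟩)) = π s0
      rw [one_zsmul, he]
      simp
    have hψ : Function.Surjective ψ := by
      rw [← AddMonoidHom.range_eq_top]
      have h1 : AddSubgroup.closure (π '' S) = ⊤ := by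
        rw [← AddMonoidHom.map_closure, hSgen, ← AddMonoidHom.range_eq_map,
          AddMonoidHom.range_eq_top]
        exact QuotientAddGroup.mk'_surjective _
      rw [eq_top_iff, ← h1]
      refine (AddSubgroup.closure_le _).mpr ?_
      rintro _ ⟨s0, hs0, rfl⟩
      exact hhit s0 hs0
    calc Nat.card (G ⧸ mγ.range) ≤ Nat.card (Fin S.card → ZMod γ) :=
          Nat.card_le_card_of_surjective ψ hψ
      _ = γ ^ AddGroup.rank G := by
          rw [Nat.card_pi]
          simp [Nat.card_zmod, hScard]
  -- Step C : assemble
  have hkercard : (Finset.univ.filter fun z : Fin k → G => ∑ i, v i • z i = 0).card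
      = Nat.card φ.ker := by
    rw [Nat.card_eq_fintype_card]
    rw [Fintype.card_congr (Equiv.subtypeEquivRight
      (fun z => by rw [AddMonoidHom.mem_ker]; exact Iff.rfl) : {z : Fin k → G // ∑ i, v i • z i = 0} ≃ φ.ker).symm]
    rw [Fintype.card_subtype]
  have hsplit : Fintype.card G ^ k = Nat.card φ.range * Nat.card φ.ker := by
    have h := AddSubgroup.card_eq_card_quotient_mul_card_addSubgroup φ.ker
    rw [Nat.card_congr (QuotientAddGroup.quotientKerEquivRange φ).toEquiv] at h
    rw [← h, Nat.card_eq_fintype_card]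
    simp [Fintype.card_pi]
  have hGsplit : n = Nat.card (G ⧸ mγ.range) * Nat.card mγ.range :=
    AddSubgroup.card_eq_card_quotient_mul_card_addSubgroup mγ.range
  have hrange : Nat.card mγ.range ≤ Nat.card φ.range :=
    AddSubgroup.card_le_of_le hA
  calc n * (Finset.univ.filter fun z : Fin k → G => ∑ i, v i • z i = 0).card
      = (Nat.card (G ⧸ mγ.range) * Nat.card mγ.range) * Nat.card φ.ker := by
        rw [hkercard, ← hGsplit]
    _ ≤ (γ ^ AddGroup.rank G * Nat.card φ.range) * Nat.card φ.ker := by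
        exact Nat.mul_le_mul_right _ (Nat.mul_le_mul hB hrange)
    _ = γ ^ AddGroup.rank G * Fintype.card G ^ k := by
        rw [hsplit]; ring

/-- Let `G` be a finite abelian group of order `n`, `Z₁, …, Z_k` i.i.d. uniform on `G`,
and `V` an independent `ℤ^k`-valued random variable (pmf `p`), with
`g = gcd(V₁, …, V_k, n)`. Then
`n · P(V · Z = 0 and V ≠ 0) ≤ E[g^{d(G)} 1{V ≠ 0}]`. -/
theorem gcd_expectation_bound
    (G : Type*) [AddCommGroup G] [Fintype G] [DecidableEq G] [AddGroup.FG G]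
    (k n : ℕ) (hn : n = Nat.card G)
    (p : (Fin k → ℤ) → ℝ) (hp0 : ∀ v, 0 ≤ p v) (hp1 : ∑' v, p v = 1) :
    (n : ℝ) * ∑' v : Fin k → ℤ, p v *
        (if v ≠ 0 then
          ((Finset.univ.filter fun z : Fin k → G => ∑ i, v i • z i = 0).card : ℝ)
            / (Fintype.card G : ℝ) ^ k
        else 0)
      ≤ ∑' v : Fin k → ℤ, p v *
          (if v ≠ 0 then
            ((Nat.gcd (Finset.univ.gcd fun i => (v i).natAbs) n : ℝ))
              ^ AddGroup.rank G
          else 0) := by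
  classical
  subst hn
  set d : ℕ := AddGroup.rank G with hd
  set X : (Fin k → ℤ) → ℝ := fun v =>
    if v ≠ 0 then
      ((Finset.univ.filter fun z : Fin k → G => ∑ i, v i • z i = 0).card : ℝ)
        / (Fintype.card G : ℝ) ^ k
    else 0 with hX
  set Y : (Fin k → ℤ) → ℝ := fun v =>
    if v ≠ 0 then
      ((Nat.gcd (Finset.univ.gcd fun i => (v i).natAbs) (Nat.card G) : ℝ)) ^ d
    else 0 with hY
  have hD : (0 : ℝ) < (Fintype.card G : ℝ) ^ k :=
    pow_pos (by exact_mod_cast Fintype.card_pos) k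
  have hnpos : (0 : ℕ) < Nat.card G := Nat.card_pos
  -- termwise bound
  have hterm : ∀ v, (Nat.card G : ℝ) * (p v * X v) ≤ p v * Y v := by
    intro v
    by_cases hv : v = 0
    · simp [hX, hY, hv]
    · rw [hX, hY]
      simp only [if_pos hv]
      rw [mul_comm ((Nat.card G : ℝ)), mul_assoc]
      refine mul_le_mul_of_nonneg_left ?_ (hp0 v)
      rw [div_mul_eq_mul_div, div_le_iff₀ hD]
      calc ((Finset.univ.filter fun z : Fin k → G => ∑ i, v i • z i = 0).card : ℝ)
            * (Nat.card G : ℝ)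
          = ((Nat.card G * (Finset.univ.filter
              fun z : Fin k → G => ∑ i, v i • z i = 0).card : ℕ) : ℝ) := by
            push_cast; ring
        _ ≤ (((Nat.gcd (Finset.univ.gcd fun i => (v i).natAbs) (Nat.card G)) ^ d
              * (Fintype.card G) ^ k : ℕ) : ℝ) := by
            exact_mod_cast key_card G v
        _ = ((Nat.gcd (Finset.univ.gcd fun i => (v i).natAbs) (Nat.card G) : ℝ)) ^ d
              * (Fintype.card G : ℝ) ^ k := by push_cast; ring
  have hX0 : ∀ v, 0 ≤ X v := by
    intro v
    simp only [hX]
    split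
    · positivity
    · exact le_rfl
  have hY0 : ∀ v, 0 ≤ p v * Y v := by
    intro v
    refine mul_nonneg (hp0 v) ?_
    simp only [hY]; split
    · positivity
    · exact le_rfl
  have hps : Summable p := by
    by_contra h
    rw [tsum_eq_zero_of_not_summable h] at hp1
    norm_num at hp1
  have hYle : ∀ v, p v * Y v ≤ p v * (Nat.card G : ℝ) ^ d := by
    intro v
    refine mul_le_mul_of_nonneg_left ?_ (hp0 v)
    simp only [hY]
    split
    · refine pow_le_pow_left₀ (by positivity) ?_ d
      exact_mod_cast Nat.le_of_dvd hnpos (Nat.gcd_dvd_right _ _)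
    · positivity
  have hYs : Summable (fun v => p v * Y v) :=
    Summable.of_nonneg_of_le hY0 hYle (hps.mul_right _)
  have hLs : Summable (fun v => (Nat.card G : ℝ) * (p v * X v)) :=
    Summable.of_nonneg_of_le
      (fun v => mul_nonneg (by positivity) (mul_nonneg (hp0 v) (hX0 v)))
      hterm hYs
  calc (Nat.card G : ℝ) * ∑' v, p v * X v
      = ∑' v, (Nat.card G : ℝ) * (p v * X v) := (tsum_mul_left).symm
    _ ≤ ∑' v, p v * Y v := Summable.tsum_le_tsum hterm hLs hYs
end
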